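/- Let Σ be a finite alphabet containing the symbols 0, 1 and $, let G be a 1D SLP deriving a string W over Σ, and let B be a finite set of nonempty binary strings (strings over {0,1}) such that for every b ∈ B the string $b$ (b surrounded by one $ on each side) occurs as a substring of W. Then the number of nonterminals of G is at least |B|. -/

import Mathlib

/-!
## Two-dimensional strings.
A 2D string over alphabet `A` of size `h × w` is represented canonically:
`f i j` is `some` of the character in (0-indexed) row `i`, column `j` when
`i < h` and `j < w`, and `none` outside of the rectangle.  All operations
below produce such canonical representations, so equality of 2D strings
built from them coincides with equality of the dimensions and of all entries.
-/
structure Str2 (A : Type) where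
  h : ℕ
  w : ℕ
  f : ℕ → ℕ → Option A

namespace Str2

variable {A : Type}

/-- Canonical constructor: pads with `none` outside of the `h × w` rectangle. -/
def mk' (h w : ℕ) (g : ℕ → ℕ → Option A) : Str2 A :=
  ⟨h, w, fun i j => if i < h ∧ j < w then g i j else none⟩

/-- The empty 2D string. -/
def empty : Str2 A := ⟨0, 0, fun _ _ => none⟩

/-- The `1 × 1` 2D string consisting of a single character. -/
def single (a : A) : Str2 A := mk' 1 1 fun _ _ => some a

/-- Horizontal concatenation `S ⊞ T` (meaningful when the heights agree). -/
def hcat (S T : Str2 A) : Str2 A :=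
  mk' S.h (S.w + T.w) fun i j => if j < S.w then S.f i j else T.f i (j - S.w)

/-- Vertical concatenation `S ⊟ T` (meaningful when the widths agree). -/
def vcat (S T : Str2 A) : Str2 A :=
  mk' (S.h + T.h) S.w fun i j => if i < S.h then S.f i j else T.f (i - S.h) j

/-- Horizontal concatenation `S₁ ⊞ S₂ ⊞ ⋯ ⊞ S_k` of a list of 2D strings. -/
def hcatList : List (Str2 A) → Str2 A
  | [] => empty
  | S :: rest => rest.foldl hcat S

/-- Vertical concatenation `S₁ ⊟ S₂ ⊟ ⋯ ⊟ S_k` of a list of 2D strings. -/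
def vcatList : List (Str2 A) → Str2 A
  | [] => empty
  | S :: rest => rest.foldl vcat S

/-- The transpose. -/
def transpose (S : Str2 A) : Str2 A := mk' S.w S.h fun i j => S.f j i

/-- The `i`-th row (0-indexed) of `S`, as a `1 × w` 2D string. -/
def rowStr (S : Str2 A) (i : ℕ) : Str2 A := mk' 1 S.w fun _ j => S.f i j

/-- The `j`-th column (0-indexed) of `S`, read top to bottom, as a `1 × h` 2D string. -/
def colStr (S : Str2 A) (j : ℕ) : Str2 A := mk' 1 S.h fun _ i => S.f i j

/-- A height-one 2D string, viewed as an ordinary (1D) string, i.e. a list. -/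
def toList (S : Str2 A) : List A := (List.range S.w).filterMap fun j => S.f 0 j

/-- An ordinary (1D) string viewed as a height-one 2D string. -/
def ofList (l : List A) : Str2 A := mk' 1 l.length fun _ j => l[j]?

/-- The concatenation of all rows of `S` from top to bottom,
as a height-one 2D string of width `h * w`. -/
def rowsConcat (S : Str2 A) : Str2 A :=
  mk' 1 (S.h * S.w) fun _ j => S.f (j / S.w) (j % S.w)

end Str2

/-- The right-hand side of a production of a 2D SLP: a single character,
a horizontal concatenation of two nonterminals, or a vertical concatenation
of two nonterminals. -/
inductive Rhs2 (A V : Type) where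
  | chr : A → Rhs2 A V
  | horiz : V → V → Rhs2 A V
  | vert : V → V → Rhs2 A V

/-- A two-dimensional straight-line program over the alphabet `A`:
a finite set `V` of nonterminals, a starting nonterminal, and a production
map `rhs`.  Acyclicity of the relation "appears in the right-hand side of"
is witnessed by the function `rank`, which strictly decreases from the
left-hand side of each production to the nonterminals on its right-hand side. -/
structure SLP2 (A : Type) where
  V : Type
  fintypeV : Fintype V
  start : V
  rhs : V → Rhs2 A V
  rank : V → ℕ
  rank_horiz : ∀ {X Y Z}, rhs X = Rhs2.horiz Y Z → rank Y < rank X ∧ rank Z < rank X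
  rank_vert : ∀ {X Y Z}, rhs X = Rhs2.vert Y Z → rank Y < rank X ∧ rank Z < rank X

namespace SLP2

variable {A : Type}

/-- Fuel-based evaluation of expansions (with enough fuel it computes the
unique expansion of a nonterminal). -/
def expAux (G : SLP2 A) : ℕ → G.V → Str2 A
  | 0, _ => Str2.empty
  | n + 1, X =>
    match G.rhs X with
    | .chr a => Str2.single a
    | .horiz Y Z => (G.expAux n Y).hcat (G.expAux n Z)
    | .vert Y Z => (G.expAux n Y).vcat (G.expAux n Z)

/-- The (unique) expansion of a nonterminal `X`: since `rank` strictly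
decreases along productions, fuel `rank X + 1` always suffices. -/
def expNT (G : SLP2 A) (X : G.V) : Str2 A := G.expAux (G.rank X + 1) X

/-- The 2D string derived by the SLP. -/
def exp (G : SLP2 A) : Str2 A := G.expNT G.start

/-- Fuel-based computation of the depth of the derivation tree below a
nonterminal (a node labeled by a production `chr σ` has a single leaf child). -/
def depthAux (G : SLP2 A) : ℕ → G.V → ℕ
  | 0, _ => 0
  | n + 1, X =>
    match G.rhs X with
    | .chr _ => 1
    | .horiz Y Z => 1 + max (G.depthAux n Y) (G.depthAux n Z)
    | .vert Y Z => 1 + max (G.depthAux n Y) (G.depthAux n Z)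

/-- The depth of the derivation tree below nonterminal `X`. -/
def depthNT (G : SLP2 A) (X : G.V) : ℕ := G.depthAux (G.rank X + 1) X

/-- The depth of the SLP: the depth of its derivation tree. -/
def depth (G : SLP2 A) : ℕ := G.depthNT G.start

/-- The size of the SLP: the total number of symbols on the right-hand
sides of all productions. -/
def size (G : SLP2 A) : ℕ :=
  letI := G.fintypeV
  ∑ X : G.V, (match G.rhs X with
    | .chr _ => 1
    | .horiz _ _ => 2
    | .vert _ _ => 2)

/-- The number of nonterminals of the SLP. -/
def numNT (G : SLP2 A) : ℕ :=
  letI := G.fintypeV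
  Fintype.card G.V

/-- Well-formedness: dimensions match in every production, i.e. in a
horizontal concatenation both arguments have equal heights, and in a
vertical concatenation both arguments have equal widths. -/
def WF (G : SLP2 A) : Prop :=
  ∀ X : G.V,
    match G.rhs X with
    | .chr _ => True
    | .horiz Y Z => (G.expNT Y).h = (G.expNT Z).h
    | .vert Y Z => (G.expNT Y).w = (G.expNT Z).w

/-- A 1D SLP: a 2D SLP that uses only horizontal concatenations and derives
a string of height `1`. -/
def OneDim (G : SLP2 A) : Prop :=
  (∀ X Y Z, G.rhs X ≠ Rhs2.vert Y Z) ∧ (G.exp).h = 1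

end SLP2
/-- The alphabet `{0, 1, $}`. -/
inductive Alpha3 : Type where
  | zero : Alpha3
  | one : Alpha3
  | dollar : Alpha3
deriving DecidableEq

instance : Fintype Alpha3 :=
  ⟨{Alpha3.zero, Alpha3.one, Alpha3.dollar}, fun x => by cases x <;> simp⟩

/-- For `N = 2^n`, the 2D string `Bin_N` of size `N × (n+2)` whose `i`-th row
(1-indexed) is the `n`-bit binary representation (most significant bit first)
of `i - 1`, surrounded by one `$` symbol on each side. -/
def binStr (n : ℕ) : Str2 Alpha3 :=
  Str2.mk' (2 ^ n) (n + 2) fun i j =>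
    some (if j = 0 ∨ j = n + 1 then Alpha3.dollar
      else if Nat.testBit i (n - j) then Alpha3.one else Alpha3.zero)

/-- For `N = 2^n`, the 2D string `ShiftBin_N` of size `2N × N(n+2)`: for every
`i ∈ [0..N-1]`, the columns `i(n+2)+1` through `(i+1)(n+2)` (1-indexed) consist
of `i` rows filled with `0`'s, followed by a copy of `Bin_N`, followed by
`N - i` rows filled with `0`'s. -/
def shiftBinStr (n : ℕ) : Str2 Alpha3 :=
  Str2.mk' (2 * 2 ^ n) (2 ^ n * (n + 2)) fun r c =>
    let i := c / (n + 2)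
    if i ≤ r ∧ r < i + 2 ^ n then (binStr n).f (r - i) (c % (n + 2)) else some Alpha3.zero

/-- A binary string `b`, surrounded by one `$` symbol on each side, as a string
over an alphabet with distinguished symbols `z` (zero), `o` (one), `d` (dollar). -/
def dollarWrap {A : Type} (z o d : A) (b : List Bool) : List A :=
  d :: (b.map fun x => if x then o else z) ++ [d]

/-- The exponent of `M'`: the largest `m` such that `M' = 2^m` satisfies
`M' * (log₂ M' + 2) ≤ M / 2`, i.e. `2 * 2^m * (m + 2) ≤ M`. -/
def mExp (M : ℕ) : ℕ := Nat.findGreatest (fun m => 2 * 2 ^ m * (m + 2) ≤ M) M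

/-- The 2D string `C_{N,M}` of size `N × M`: with `M'` the largest power of two
such that `M' * (log₂ M' + 2) ≤ M / 2` and `B = ShiftBin_{M'}` (of size
`2M' × M'(log₂ M' + 2)`), it consists of a left block of `⌊N/(2M')⌋` vertically
concatenated copies of `B` padded below with `0`'s to height `N`; to its right,
a right block of `M'` rows of `0`'s followed by `⌊(N-M')/(2M')⌋` vertically
concatenated copies of `B`, padded below with `0`'s to height `N`; and columns
of `0`'s padding the total width to `M`. -/
def gadgetC (N M : ℕ) : Str2 Alpha3 :=
  let n := mExp M
  let M' := 2 ^ n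
  let W := M' * (n + 2)
  Str2.mk' N M fun r c =>
    if c < W then
      (if r < 2 * M' * (N / (2 * M')) then (shiftBinStr n).f (r % (2 * M')) c
       else some Alpha3.zero)
    else if c < 2 * W then
      (if M' ≤ r ∧ r < M' + 2 * M' * ((N - M') / (2 * M'))
       then (shiftBinStr n).f ((r - M') % (2 * M')) (c - W)
       else some Alpha3.zero)
    else some Alpha3.zero

/-!
A nonterminal `X ⊞ Y` is charged for the maximal `$`-free block of `exp(X) exp(Y)` that
contains the junction of the two halves. An occurrence of `$b$` in `W` descends in the
derivation tree to a nonterminal whose junction it crosses; as `$b$` straddles that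
junction and `b` contains no `$`, the charged block is exactly `b`. Distinct `b` are
therefore charged to distinct nonterminals.
-/

namespace List

variable {α : Type*}

def Straddles (m u v : List α) : Prop :=
  ∃ s m₁ m₂ t, u = s ++ m₁ ∧ v = m₂ ++ t ∧ m = m₁ ++ m₂ ∧ m₁ ≠ [] ∧ m₂ ≠ []

lemma infix_append_or_straddles {m u v : List α} (h : m <:+: u ++ v) :
    m <:+: u ∨ m <:+: v ∨ Straddles m u v := by
  obtain ⟨s, t, hst⟩ := h
  rcases append_eq_append_iff.1 hst with ⟨r, hu, -⟩ | ⟨r, hsm, hv⟩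
  · exact .inl ⟨s, r, hu.symm⟩
  rcases append_eq_append_iff.1 hsm with ⟨m₁, hu, hm⟩ | ⟨p, hs, hr⟩
  · by_cases hm₁ : m₁ = []
    · subst hm₁
      exact .inr (.inl ⟨[], t, by simp_all⟩)
    by_cases hr : r = []
    · subst hr
      exact .inl ⟨s, [], by simp_all⟩
    exact .inr (.inr ⟨s, m₁, r, t, hu, hv, hm, hm₁, hr⟩)
  · exact .inr (.inl ⟨p, t, by simp_all⟩)

lemma Straddles.cons_append_singleton {d : α} {b u v : List α}
    (h : Straddles (d :: b ++ [d]) u v) :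
    ∃ s b₁ b₂ t, u = s ++ d :: b₁ ∧ v = b₂ ++ d :: t ∧ b = b₁ ++ b₂ := by
  obtain ⟨s, m₁, m₂, t, rfl, rfl, hm, hm₁, hm₂⟩ := h
  obtain ⟨x, b₁, rfl⟩ := exists_cons_of_ne_nil hm₁
  obtain ⟨b₂, y, rfl⟩ := (eq_nil_or_concat' m₂).resolve_left hm₂
  simp only [cons_append, cons.injEq] at hm
  obtain ⟨rfl, hm⟩ := hm
  rw [← append_assoc] at hm
  obtain ⟨hb, hy⟩ := append_inj' hm rfl
  obtain rfl : y = d := by simpa using hy.symm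
  exact ⟨s, b₁, b₂, t, rfl, by simp, hb⟩

variable [DecidableEq α]

def junctionBlock (d : α) (u v : List α) : List α :=
  (u.reverse.takeWhile (· != d)).reverse ++ v.takeWhile (· != d)

lemma junctionBlock_eq_of_straddles {d : α} {b u v : List α}
    (h : Straddles (d :: b ++ [d]) u v) (hb : d ∉ b) : junctionBlock d u v = b := by
  obtain ⟨s, b₁, b₂, t, rfl, rfl, rfl⟩ := h.cons_append_singleton
  have hfree : ∀ x ∈ b₁ ++ b₂, (x != d) = true := fun x hx =>
    bne_iff_ne.2 fun hxd => hb (hxd ▸ hx)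
  simp only [mem_append] at hfree
  rw [junctionBlock, reverse_append, reverse_cons, append_assoc, singleton_append,
    takeWhile_append_of_pos fun x hx => hfree x (.inl (mem_reverse.1 hx)),
    takeWhile_append_of_pos fun x hx => hfree x (.inr hx)]
  simp

end List

namespace Str2

variable {A : Type}

lemma toList_single (a : A) : (single a).toList = [a] := by
  simp [toList, single, mk']

lemma toList_hcat {S T : Str2 A} (hS : 0 < S.h) : (S.hcat T).toList = S.toList ++ T.toList := by
  simp only [toList, hcat, mk', List.range_add, List.filterMap_append, List.filterMap_map]
  congr 1 <;> refine List.filterMap_congr fun j hj => ?_ <;> rw [List.mem_range] at hj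
  · simp [hS, hj]
    omega
  · simp [hS, hj]

end Str2

namespace SLP2

variable {A : Type} (G : SLP2 A)

lemma expAux_congr {n m : ℕ} {X : G.V} (hn : G.rank X < n) (hm : G.rank X < m) :
    G.expAux n X = G.expAux m X := by
  induction n generalizing X m with
  | zero => omega
  | succ n ih =>
    obtain ⟨m, rfl⟩ := Nat.exists_eq_add_one_of_ne_zero (by omega : m ≠ 0)
    rcases h : G.rhs X with a | ⟨Y, Z⟩ | ⟨Y, Z⟩
    · simp only [expAux, h]
    · obtain ⟨hY, hZ⟩ := G.rank_horiz h
      simp only [expAux, h]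
      rw [ih (m := m) (by omega) (by omega), ih (m := m) (by omega) (by omega)]
    · obtain ⟨hY, hZ⟩ := G.rank_vert h
      simp only [expAux, h]
      rw [ih (m := m) (by omega) (by omega), ih (m := m) (by omega) (by omega)]

lemma expNT_horiz {X Y Z : G.V} (h : G.rhs X = .horiz Y Z) :
    G.expNT X = (G.expNT Y).hcat (G.expNT Z) := by
  obtain ⟨hY, hZ⟩ := G.rank_horiz h
  show G.expAux (G.rank X + 1) X = _
  simp only [expAux, h]
  rw [G.expAux_congr hY (lt_add_one _), G.expAux_congr hZ (lt_add_one _)]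
  rfl

lemma expAux_h_pos {n : ℕ} {X : G.V} (hn : G.rank X < n) : 0 < (G.expAux n X).h := by
  induction n generalizing X with
  | zero => omega
  | succ n ih =>
    rcases h : G.rhs X with a | ⟨Y, Z⟩ | ⟨Y, Z⟩
    · simp [expAux, h, Str2.single, Str2.mk']
    · have hY := (G.rank_horiz h).1
      simpa only [expAux, h, Str2.hcat, Str2.mk'] using ih (X := Y) (by omega)
    · have hY := (G.rank_vert h).1
      simp only [expAux, h, Str2.vcat, Str2.mk']
      exact Nat.add_pos_left (ih (X := Y) (by omega)) _

def word (X : G.V) : List A := (G.expNT X).toList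

lemma word_chr {X : G.V} {a : A} (h : G.rhs X = .chr a) : G.word X = [a] := by
  simp [word, expNT, expAux, h, Str2.toList_single]

lemma word_horiz {X Y Z : G.V} (h : G.rhs X = .horiz Y Z) :
    G.word X = G.word Y ++ G.word Z := by
  rw [word, expNT_horiz G h, Str2.toList_hcat (S := G.expNT Y) (G.expAux_h_pos (lt_add_one _))]
  rfl

lemma exists_horiz_straddles (hv : ∀ X Y Z, G.rhs X ≠ .vert Y Z) {m : List A}
    (hm : 2 ≤ m.length) {X : G.V} (hX : m <:+: G.word X) :
    ∃ X Y Z, G.rhs X = .horiz Y Z ∧ m.Straddles (G.word Y) (G.word Z) := by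
  induction hr : G.rank X using Nat.strong_induction_on generalizing X with
  | _ r ih =>
  rcases h : G.rhs X with a | ⟨Y, Z⟩ | ⟨Y, Z⟩
  · have := hX.length_le
    simp only [G.word_chr h, List.length_singleton] at this
    omega
  · obtain ⟨hY, hZ⟩ := G.rank_horiz h
    rw [G.word_horiz h] at hX
    rcases List.infix_append_or_straddles hX with hY' | hZ' | hs
    · exact ih _ (hr ▸ hY) hY' rfl
    · exact ih _ (hr ▸ hZ) hZ' rfl
    · exact ⟨X, Y, Z, h, hs⟩
  · exact absurd h (hv X Y Z)

variable [DecidableEq A]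

def junctionBlock (d : A) (X : G.V) : List A :=
  match G.rhs X with
  | .horiz Y Z => List.junctionBlock d (G.word Y) (G.word Z)
  | _ => []

lemma exists_junctionBlock_eq (hv : ∀ X Y Z, G.rhs X ≠ .vert Y Z) {d : A} {b : List A}
    (hb : d ∉ b) (hocc : d :: b ++ [d] <:+: G.word G.start) :
    ∃ X, G.junctionBlock d X = b := by
  obtain ⟨X, Y, Z, h, hs⟩ := G.exists_horiz_straddles hv (by simp) hocc
  refine ⟨X, ?_⟩
  rw [junctionBlock, h]
  exact List.junctionBlock_eq_of_straddles hs hb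

end SLP2

theorem distinct_wrapped_blocks_lower_bound_general (A : Type)
    (z o d : A) (hzo : z ≠ o) (hzd : z ≠ d) (hod : o ≠ d)
    (G : SLP2 A) (h1d : G.OneDim)
    (B : Finset (List Bool))
    (hocc : ∀ b ∈ B, dollarWrap z o d b <:+: (G.exp).toList) :
    B.card ≤ G.numNT := by
  classical
  let _ : Fintype G.V := G.fintypeV
  let enc : List Bool → List A := List.map fun x => if x then o else z
  have henc : Function.Injective enc :=
    List.map_injective_iff.2 fun x y => by cases x <;> cases y <;> simp [hzo, hzo.symm]
  have hd : ∀ b, d ∉ enc b := fun b => by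
    simp only [enc, List.mem_map, not_exists, not_and]
    intro x _
    cases x <;> simp [hzd, hod]
  have hcharged : ∀ b ∈ B, enc b ∈ Finset.univ.image (G.junctionBlock d) := fun b hb =>
    let ⟨X, hX⟩ := G.exists_junctionBlock_eq h1d.1 (hd b) (hocc b hb)
    Finset.mem_image.2 ⟨X, Finset.mem_univ X, hX⟩
  calc B.card ≤ (Finset.univ.image (G.junctionBlock d)).card :=
        Finset.card_le_card_of_injOn enc hcharged henc.injOn
    _ ≤ G.numNT := Finset.card_image_le

/-- Let `Σ` be a finite alphabet containing the three
distinct symbols `0` (`z`), `1` (`o`) and `$` (`d`), let `G` be a 1D SLP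
deriving a string `W` over `Σ`, and let `B` be a finite set of nonempty
binary strings such that for every `b ∈ B` the string `$b$` occurs as a
substring of `W`. Then `G` has at least `|B|` nonterminals. -/
theorem distinct_wrapped_blocks_lower_bound (A : Type) (_ : Fintype A)
    (z o d : A) (hzo : z ≠ o) (hzd : z ≠ d) (hod : o ≠ d)
    (G : SLP2 A) (hwf : G.WF) (h1d : G.OneDim)
    (B : Finset (List Bool)) (hne : ∀ b ∈ B, b ≠ [])
    (hocc : ∀ b ∈ B, dollarWrap z o d b <:+: (G.exp).toList) :
    B.card ≤ G.numNT :=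
  distinct_wrapped_blocks_lower_bound_general A z o d hzo hzd hod G h1d B hocc
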